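/- On the Ignatiev set I, define ◇ₙ(α) = β where β_{n+1} = 0, βᵢ = 0 for i > n, and βᵢ = αᵢ + ω^{β_{i+1}} for i ≤ n (computed by downward recursion). Then ◇ₙ(α) ∈ I, it lies on the main axis (β_{i+1} = ℓ(βᵢ) for all i), and C_{◇ₙ(α)} = ⋂_{i ≤ n} Rᵢ⁻¹(C_α), where C_γ = {δ ∈ I : δⱼ ≥ γⱼ for all j} and δ Rᵢ γ iff δⱼ = γⱼ for j < i and δᵢ > γᵢ. -/

import Mathlib

/-!
`ω ^ ell x` divides `x` and `ell (x + ω ^ γ) = γ`; both are read off the Cantor normal form.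
The second makes `◇ₙ(α)` lie on the main axis. The first gives: if `y < x` and `γ ≤ ell x`
then `y + ω ^ γ ≤ x`, so by downward induction every `δ ∈ I` with `αᵢ < δᵢ` for `i ≤ n`
dominates `◇ₙ(α)`; this is exactly what membership in `Rᵢ⁻¹(C_α)` for all `i ≤ n` provides.
Conversely, if `◇ₙ(α) ≤ δ`, splicing `δ` below `i` with `α` from `i` on gives a witness
`g` with `δ Rᵢ g` and `α ≤ g`.
-/

open Ordinal

/-- `ell β` is the exponent of the last (smallest) term of the Cantor normal
form of `β` (base ω), with `ell 0 = 0`. -/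
noncomputable def ell (b : Ordinal) : Ordinal :=
  ((Ordinal.CNF omega0 b).map Prod.fst).getLastD 0

/-- `ε₀`, the least ordinal `α` with `ω ^ α = α`. -/
noncomputable def eps0 : Ordinal := Ordinal.nfp (fun a => omega0 ^ a) 0

/-- Membership in the Ignatiev set `I`: sequences of ordinals below `ε₀` with
`α (i+1) ≤ ℓ (α i)` for all `i`. -/
def IgMem (a : ℕ → Ordinal) : Prop :=
  (∀ i, a i < eps0) ∧ ∀ i, a (i + 1) ≤ ell (a i)

/-- `diaSpec n a b` says that `b = ◇ₙ(a)`: `bᵢ = 0` for `i > n` and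
`bᵢ = aᵢ + ω ^ b_{i+1}` for `i ≤ n` (downward recursion, with `b (n+1) = 0`). -/
def diaSpec (n : ℕ) (a b : ℕ → Ordinal) : Prop :=
  (∀ i, n < i → b i = 0) ∧ ∀ i, i ≤ n → b i = a i + omega0 ^ b (i + 1)

/-- `Rrel i d g` : `d Rᵢ g` in the Ignatiev frame. -/
def Rrel (i : ℕ) (d g : ℕ → Ordinal) : Prop :=
  (∀ j, j < i → d j = g j) ∧ g i < d i

universe u

section CantorNormalForm

variable {e q x y γ : Ordinal.{u}}

lemma ell_zero : ell 0 = 0 := by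
  simp [ell]

lemma ell_opow_mul_add (hq : q ≠ 0) (hqω : q < ω) (hy : y < ω ^ e) (hy0 : y ≠ 0) :
    ell (ω ^ e * q + y) = ell y := by
  simp [ell, CNF.opow_mul_add one_lt_omega0 hq hqω hy, CNF.ne_zero hy0]

lemma ell_opow_mul (hq : q ≠ 0) (hqω : q < ω) : ell (ω ^ e * q) = e := by
  simpa [ell] using congrArg (fun l => (l.map Prod.fst).getLastD 0)
    (CNF.opow_mul_add one_lt_omega0 hq hqω (opow_pos e omega0_pos))

lemma ell_opow (e : Ordinal) : ell (ω ^ e) = e := by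
  simpa using ell_opow_mul (e := e) one_ne_zero one_lt_omega0

lemma ell_le_log (x : Ordinal) : ell x ≤ log ω x := by
  rcases eq_or_ne x 0 with rfl | hx
  · simp [ell_zero]
  have hne : (CNF ω x).map Prod.fst ≠ [] := by simp [CNF.ne_zero hx]
  rw [ell, List.getLastD_eq_getLast?, List.getLast?_eq_some_getLast hne]
  obtain ⟨p, hp, hp1⟩ := List.mem_map.1 (List.getLast_mem hne)
  exact hp1 ▸ CNF.fst_le_log hp

lemma ell_add_opow (x γ : Ordinal) : ell (x + ω ^ γ) = γ := by
  induction x using CNF.rec ω with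
  | H0 => rw [zero_add, ell_opow]
  | H x hx IH =>
    set e := log ω x
    have hq : x / ω ^ e ≠ 0 := (div_opow_log_pos ω hx).ne'
    have hqω : x / ω ^ e < ω := div_opow_log_lt x one_lt_omega0
    have hr : x % ω ^ e < ω ^ e := mod_lt x (opow_pos e omega0_pos).ne'
    have hx_eq : ω ^ e * (x / ω ^ e) + x % ω ^ e = x := div_add_mod x _
    rcases lt_trichotomy γ e with hγ | rfl | hγ
    · have hsum : x % ω ^ e + ω ^ γ < ω ^ e :=
        isPrincipal_add_omega0_opow e hr ((opow_lt_opow_iff_right one_lt_omega0).2 hγ)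
      have hsum0 : x % ω ^ e + ω ^ γ ≠ 0 := by simp
      rw [← hx_eq, add_assoc, ell_opow_mul_add hq hqω hsum hsum0, IH]
    · rw [← hx_eq, add_assoc, add_omega0_opow hr, ← mul_succ]
      exact ell_opow_mul (Order.succ_ne_bot _) (isSuccLimit_omega0.succ_lt hqω)
    · have hxγ : x < ω ^ γ := (lt_opow_succ_log_self one_lt_omega0 x).trans_le
        (opow_le_opow_right omega0_pos (Order.succ_le_of_lt hγ))
      rw [add_omega0_opow hxγ, ell_opow]

lemma opow_ell_dvd (x : Ordinal) : ω ^ ell x ∣ x := by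
  induction x using CNF.rec ω with
  | H0 => exact dvd_zero _
  | H x hx IH =>
    set e := log ω x
    have hq : x / ω ^ e ≠ 0 := (div_opow_log_pos ω hx).ne'
    have hqω : x / ω ^ e < ω := div_opow_log_lt x one_lt_omega0
    have hr : x % ω ^ e < ω ^ e := mod_lt x (opow_pos e omega0_pos).ne'
    have hx_eq : ω ^ e * (x / ω ^ e) + x % ω ^ e = x := div_add_mod x _
    rcases eq_or_ne (x % ω ^ e) 0 with hr0 | hr0
    · rw [← hx_eq, hr0, add_zero, ell_opow_mul hq hqω]
      exact dvd_mul_right _ _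
    · have hle : ell (x % ω ^ e) ≤ e :=
        (ell_le_log _).trans (log_mono_right ω (mod_opow_log_lt_self ω hx).le)
      rw [← hx_eq, ell_opow_mul_add hq hqω hr hr0]
      exact dvd_add ((opow_dvd_opow ω hle).mul_right _) IH

lemma add_opow_le_of_lt (hyx : y < x) (hγ : γ ≤ ell x) : y + ω ^ γ ≤ x := by
  obtain ⟨q, hq⟩ := (opow_dvd_opow ω hγ).trans (opow_ell_dvd x)
  have hω : ω ^ γ ≠ 0 := (opow_pos γ omega0_pos).ne'
  have hdiv : y / ω ^ γ < q := (lt_mul_iff_div_lt hω).1 (hq ▸ hyx)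
  calc y + ω ^ γ = ω ^ γ * (y / ω ^ γ) + (y % ω ^ γ + ω ^ γ) := by
        rw [← add_assoc, div_add_mod]
    _ = ω ^ γ * Order.succ (y / ω ^ γ) := by
        rw [add_omega0_opow (mod_lt y hω), mul_succ]
    _ ≤ ω ^ γ * q := mul_le_mul_right (Order.succ_le_of_lt hdiv) _
    _ = x := hq.symm

end CantorNormalForm

lemma eps0_eq_epsilon_zero : eps0 = ε₀ :=
  epsilon_zero_eq_nfp.symm

lemma omega0_opow_lt_eps0 {x : Ordinal} (hx : x < eps0) : ω ^ x < eps0 := by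
  rw [eps0_eq_epsilon_zero] at hx ⊢
  rw [← omega0_opow_epsilon 0]
  exact (opow_lt_opow_iff_right one_lt_omega0).2 hx

lemma add_lt_eps0 {x y : Ordinal} (hx : x < eps0) (hy : y < eps0) : x + y < eps0 := by
  rw [eps0_eq_epsilon_zero, ← omega0_opow_epsilon 0] at hx hy ⊢
  exact isPrincipal_add_omega0_opow _ hx hy

lemma Nat.forall_of_forall_gt_of_step {P : ℕ → Prop} (n : ℕ) (h_gt : ∀ i, n < i → P i)
    (h_step : ∀ i ≤ n, P (i + 1) → P i) (i : ℕ) : P i := by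
  rcases lt_or_ge n i with hi | hi
  · exact h_gt i hi
  · exact Nat.decreasingInduction (motive := fun k _ => P k)
      (fun k hk ih => h_step k (Nat.lt_succ_iff.1 hk) ih) (h_gt (n + 1) n.lt_succ_self)
      (Nat.le_succ_of_le hi)

section Diamond

variable {n : ℕ} {a b d : ℕ → Ordinal}

lemma diaSpec.succ_eq_ell (hb : diaSpec n a b) (i : ℕ) : b (i + 1) = ell (b i) := by
  rcases le_or_gt i n with hi | hi
  · rw [hb.2 i hi, ell_add_opow]
  · rw [hb.1 i hi, hb.1 (i + 1) (by omega), ell_zero]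

lemma diaSpec.igMem (ha : IgMem a) (hb : diaSpec n a b) : IgMem b := by
  refine ⟨Nat.forall_of_forall_gt_of_step n (fun i hi => ?_) (fun i hi hlt => ?_),
    fun i => (hb.succ_eq_ell i).le⟩
  · rw [hb.1 i hi, eps0_eq_epsilon_zero]
    exact epsilon_pos 0
  · rw [hb.2 i hi]
    exact add_lt_eps0 (ha.1 i) (omega0_opow_lt_eps0 hlt)

lemma diaSpec.lt (hb : diaSpec n a b) {i : ℕ} (hi : i ≤ n) : a i < b i := by
  rw [hb.2 i hi]
  exact lt_add_of_pos_right _ (opow_pos _ omega0_pos)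

lemma diaSpec.le_of_forall_lt (hb : diaSpec n a b) (hd : ∀ i, d (i + 1) ≤ ell (d i))
    (had : ∀ i ≤ n, a i < d i) (i : ℕ) : b i ≤ d i := by
  refine Nat.forall_of_forall_gt_of_step (P := fun i => b i ≤ d i) n
    (fun i hi => ?_) (fun i hi hle => ?_) i
  · rw [hb.1 i hi]
    exact zero_le
  · rw [hb.2 i hi]
    exact add_opow_le_of_lt (had i hi) (hle.trans (hd i))

end Diamond

section Splice

variable {i : ℕ} {a d : ℕ → Ordinal}

lemma IgMem.piecewise_Iio (hd : IgMem d) (ha : IgMem a) (h : a i ≤ d i) :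
    IgMem ((Set.Iio i).piecewise d a) := by
  refine ⟨fun j => ?_, fun j => ?_⟩
  · by_cases hj : j < i
    · simpa [Set.piecewise, hj] using hd.1 j
    · simpa [Set.piecewise, hj] using ha.1 j
  · rcases lt_trichotomy (j + 1) i with hj | rfl | hj
    · simpa [Set.piecewise, hj, (Nat.lt_succ_self j).trans hj] using hd.2 j
    · simpa [Set.piecewise] using h.trans (hd.2 j)
    · simpa [Set.piecewise, hj.not_gt, (Nat.lt_succ_iff.1 hj).not_gt] using ha.2 j

lemma rrel_piecewise_Iio (h : a i < d i) : Rrel i d ((Set.Iio i).piecewise d a) :=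
  ⟨fun j hj => by simp [Set.piecewise, hj], by simpa [Set.piecewise] using h⟩

end Splice

/-- `◇ₙ(α)` belongs to `I`, lies on the main axis, and its cone is
`⋂_{i ≤ n} Rᵢ⁻¹(C_α)`. -/
theorem stmt_11 (n : ℕ) (a b : ℕ → Ordinal) (ha : IgMem a)
    (hb : diaSpec n a b) :
    IgMem b ∧ (∀ i, b (i + 1) = ell (b i)) ∧
    ∀ d : ℕ → Ordinal, IgMem d →
      ((∀ j, b j ≤ d j) ↔
        ∀ i, i ≤ n → ∃ g : ℕ → Ordinal, IgMem g ∧ Rrel i d g ∧ ∀ j, a j ≤ g j) := by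
  refine ⟨hb.igMem ha, hb.succ_eq_ell, fun d hd => ⟨fun hbd i hi => ?_, fun H => ?_⟩⟩
  · have hai : a i < d i := (hb.lt hi).trans_le (hbd i)
    refine ⟨_, hd.piecewise_Iio ha hai.le, rrel_piecewise_Iio hai, fun j => ?_⟩
    by_cases hj : j < i
    · simpa [Set.piecewise, hj] using (hb.lt (hj.le.trans hi)).le.trans (hbd j)
    · simp [Set.piecewise, hj]
  · refine hb.le_of_forall_lt hd.2 fun i hi => ?_
    obtain ⟨g, -, ⟨-, hgi⟩, hag⟩ := H i hi
    exact (hag i).trans_lt hgi
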